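/- arXiv:2311.15346 — 4 statements merged into one kernel-verified Lean document; each statement's English description precedes it below -/
import Mathlib

section
/- Let G = (V,E) be a finite simple graph. For every w ∈ ℝ₊^E, mc(G,w) = max{ wᵀz : z ∈ ℝ₊^E, fcc(G,z) ≤ 1 }, where mc(G,w) := max_{S⊆V} wᵀχ_{δ(S)} and fcc(G,z) := min{ 1ᵀy : y ≥ 0, ∑_S y_S χ_{δ(S)} ≥ z }. -/
open Matrix BigOperators

variable {V : Type*}

/-- The weighted Laplacian `L_G(w) = ∑_{ij ∈ E} w_ij (e_i - e_j)(e_i - e_j)ᵀ`,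
written as a sum over ordered pairs of adjacent vertices (each edge counted twice,
hence the factor 1/2). -/
noncomputable def lap [Fintype V] [DecidableEq V] (G : SimpleGraph V) [DecidableRel G.Adj]
    (w : V → V → ℝ) : Matrix V V ℝ :=
  (1 / 2 : ℝ) • ∑ i : V, ∑ j : V,
    if G.Adj i j then
      w i j • vecMulVec (Pi.single i 1 - Pi.single j 1) (Pi.single i 1 - Pi.single j 1)
    else 0

/-- The adjoint of the Laplacian: `(L_G*(Y))_{ij} = Y_ii + Y_jj - Y_ij - Y_ji`. -/
def lapAdj (Y : Matrix V V ℝ) (i j : V) : ℝ := Y i i + Y j j - Y i j - Y j i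

/-- Inner product of two edge-weight vectors, `wᵀz = ∑_{ij ∈ E} w_ij z_ij`
(sum over ordered pairs, factor 1/2). -/
noncomputable def edgeInner [Fintype V] (G : SimpleGraph V) [DecidableRel G.Adj]
    (w z : V → V → ℝ) : ℝ :=
  (1 / 2 : ℝ) * ∑ i : V, ∑ j : V, if G.Adj i j then w i j * z i j else 0

/-- The 0/1 incidence vector of the cut `δ(S)`, as a function on (ordered) pairs. -/
def cutInd [DecidableEq V] (G : SimpleGraph V) [DecidableRel G.Adj] (S : Finset V)
    (i j : V) : ℝ :=
  if G.Adj i j ∧ ¬ ((i ∈ S) ↔ (j ∈ S)) then 1 else 0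

/-- The maximum cut value `mc(G, w) = max_{S ⊆ V} wᵀ χ_{δ(S)}`. -/
noncomputable def mcVal [Fintype V] [DecidableEq V] (G : SimpleGraph V) [DecidableRel G.Adj]
    (w : V → V → ℝ) : ℝ :=
  ⨆ S : Finset V, edgeInner G w (cutInd G S)

/-- The fractional cut-covering value
`fcc(G, z) = min { 1ᵀy : y ≥ 0, ∑_S y_S χ_{δ(S)} ≥ z }`. -/
noncomputable def fccVal [Fintype V] [DecidableEq V] (G : SimpleGraph V) [DecidableRel G.Adj]
    (z : V → V → ℝ) : ℝ :=
  sInf { t : ℝ | ∃ y : Finset V → ℝ, (∀ S, 0 ≤ y S) ∧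
    (∀ i j, G.Adj i j → z i j ≤ ∑ S : Finset V, y S * cutInd G S i j) ∧
    t = ∑ S : Finset V, y S }

/-- The SDP value
`GW°(G, z) = inf { μ ≥ 0 : Y PSD, diag Y = μ·1, (1/4)L_G*(Y) ≥ z }`. -/
noncomputable def GWpolar [Fintype V] [DecidableEq V] (G : SimpleGraph V) [DecidableRel G.Adj]
    (z : V → V → ℝ) : ℝ :=
  sInf { μ : ℝ | 0 ≤ μ ∧ ∃ Y : Matrix V V ℝ, Y.PosSemidef ∧ (∀ i, Y i i = μ) ∧
    ∀ i j, G.Adj i j → z i j ≤ (1 / 4 : ℝ) * lapAdj Y i j }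

/-!
Every cut vector `χ_{δ(S)}` is covered by the cut `S` alone, so it is feasible on the
right-hand side and `mc(G,w) ≤ max {…}`. Conversely, if `y ≥ 0` and `z ≤ ∑_S y_S χ_{δ(S)}` on
the edges, then, as `w ≥ 0`, `wᵀz ≤ ∑_S y_S wᵀχ_{δ(S)} ≤ (1ᵀy) mc(G,w)`; minimising over `y`
gives `wᵀz ≤ fcc(G,z) mc(G,w) ≤ mc(G,w)`.
-/

namespace SimpleGraph

variable (G : SimpleGraph V) [DecidableRel G.Adj]

section

variable [DecidableEq V]

lemma cutInd_nonneg (S : Finset V) (i j : V) : 0 ≤ cutInd G S i j := by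
  unfold cutInd; split_ifs <;> norm_num

lemma cutInd_symm (S : Finset V) (i j : V) : cutInd G S i j = cutInd G S j i := by
  simp only [cutInd, G.adj_comm i j, Iff.comm]

lemma cutInd_singleton_of_adj {i j : V} (h : G.Adj i j) : cutInd G {i} i j = 1 := by
  simp [cutInd, h, (G.ne_of_adj h).symm]

@[simp]
lemma cutInd_empty : cutInd G ∅ = 0 := by
  ext i j; simp [cutInd]

end

variable [Fintype V]

lemma edgeInner_eq_sum (w z : V → V → ℝ) :
    edgeInner G w z =
      ∑ i : V, ∑ j : V, ((1 / 2 : ℝ) * if G.Adj i j then w i j else 0) * z i j := by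
  simp only [edgeInner, Finset.mul_sum, ite_mul, zero_mul, mul_ite, mul_zero, mul_assoc]

lemma edgeInner_sum_mul {ι : Type*} (s : Finset ι) (w : V → V → ℝ) (y : ι → ℝ)
    (c : ι → V → V → ℝ) :
    edgeInner G w (fun i j => ∑ k ∈ s, y k * c k i j) =
      ∑ k ∈ s, y k * edgeInner G w (c k) := by
  simp only [edgeInner_eq_sum, Finset.mul_sum]
  rw [Finset.sum_comm (s := s)]
  refine Finset.sum_congr rfl fun i _ => ?_
  rw [Finset.sum_comm (s := s)]
  exact Finset.sum_congr rfl fun j _ => Finset.sum_congr rfl fun k _ => by ring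

variable {G} in
lemma edgeInner_le_edgeInner {w z z' : V → V → ℝ} (hw : ∀ i j, G.Adj i j → 0 ≤ w i j)
    (hz : ∀ i j, G.Adj i j → z i j ≤ z' i j) : edgeInner G w z ≤ edgeInner G w z' := by
  unfold edgeInner
  gcongr with i _ j _
  split_ifs with h
  exacts [mul_le_mul_of_nonneg_left (hz i j h) (hw i j h), le_rfl]

variable [DecidableEq V]

lemma edgeInner_cutInd_le_mcVal (w : V → V → ℝ) (S : Finset V) :
    edgeInner G w (cutInd G S) ≤ mcVal G w :=
  le_ciSup (f := fun S => edgeInner G w (cutInd G S)) (Set.finite_range _).bddAbove S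

lemma mcVal_nonneg (w : V → V → ℝ) : 0 ≤ mcVal G w := by
  simpa [edgeInner] using edgeInner_cutInd_le_mcVal G w ∅

lemma fccVal_le {z : V → V → ℝ} {y : Finset V → ℝ} (hy : ∀ S, 0 ≤ y S)
    (hz : ∀ i j, G.Adj i j → z i j ≤ ∑ S, y S * cutInd G S i j) : fccVal G z ≤ ∑ S, y S :=
  csInf_le ⟨0, by rintro _ ⟨y, hy, -, rfl⟩; exact Finset.sum_nonneg fun S _ => hy S⟩
    ⟨y, hy, hz, rfl⟩

lemma fccVal_cutInd_le_one (S : Finset V) : fccVal G (cutInd G S) ≤ 1 := by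
  simpa using fccVal_le G (y := fun T => if T = S then 1 else 0)
    (fun T => by positivity) (fun i j _ => by simp)

/-- A constant cover of height `∑ |z|` works, since every edge `ij` lies in the cut `δ({i})`. -/
lemma exists_fracCutCover (z : V → V → ℝ) :
    ∃ y : Finset V → ℝ, (∀ S, 0 ≤ y S) ∧
      ∀ i j, G.Adj i j → z i j ≤ ∑ S, y S * cutInd G S i j := by
  set B := ∑ i, ∑ j, |z i j|
  have hB : 0 ≤ B := by positivity
  refine ⟨fun _ => B, fun _ => hB, fun i j hij => ?_⟩
  calc z i j ≤ |z i j| := le_abs_self _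
    _ ≤ ∑ j', |z i j'| := Finset.single_le_sum (f := fun j' => |z i j'|)
        (fun _ _ => abs_nonneg _) (Finset.mem_univ j)
    _ ≤ B := Finset.single_le_sum (f := fun i' => ∑ j', |z i' j'|)
        (fun _ _ => by positivity) (Finset.mem_univ i)
    _ = B * cutInd G {i} i j := by rw [cutInd_singleton_of_adj G hij, mul_one]
    _ ≤ ∑ S, B * cutInd G S i j := Finset.single_le_sum (f := fun S => B * cutInd G S i j)
        (fun S _ => mul_nonneg hB (cutInd_nonneg G S i j)) (Finset.mem_univ _)

variable {G}

lemma edgeInner_le_sum_mul_mcVal {w z : V → V → ℝ} (hw : ∀ i j, G.Adj i j → 0 ≤ w i j)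
    {y : Finset V → ℝ} (hy : ∀ S, 0 ≤ y S)
    (hz : ∀ i j, G.Adj i j → z i j ≤ ∑ S, y S * cutInd G S i j) :
    edgeInner G w z ≤ (∑ S, y S) * mcVal G w :=
  calc edgeInner G w z ≤ edgeInner G w (fun i j => ∑ S, y S * cutInd G S i j) :=
        edgeInner_le_edgeInner hw hz
    _ = ∑ S, y S * edgeInner G w (cutInd G S) := edgeInner_sum_mul G _ w y (cutInd G)
    _ ≤ ∑ S, y S * mcVal G w := Finset.sum_le_sum fun S _ =>
        mul_le_mul_of_nonneg_left (edgeInner_cutInd_le_mcVal G w S) (hy S)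
    _ = (∑ S, y S) * mcVal G w := (Finset.sum_mul _ _ _).symm

lemma edgeInner_le_fccVal_mul_mcVal {w : V → V → ℝ} (hw : ∀ i j, G.Adj i j → 0 ≤ w i j)
    (z : V → V → ℝ) : edgeInner G w z ≤ fccVal G z * mcVal G w := by
  rw [mul_comm, fccVal, ← smul_eq_mul, ← Real.sInf_smul_of_nonneg (mcVal_nonneg G w)]
  obtain ⟨y, hy, hz⟩ := exists_fracCutCover G z
  refine le_csInf ⟨_, Set.smul_mem_smul_set ⟨y, hy, hz, rfl⟩⟩ ?_
  rintro _ ⟨_, ⟨y, hy, hz, rfl⟩, rfl⟩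
  dsimp only
  rw [smul_eq_mul, mul_comm]
  exact edgeInner_le_sum_mul_mcVal hw hy hz

end SimpleGraph

open SimpleGraph in
theorem mc_as_polar_general [Fintype V] [DecidableEq V] (G : SimpleGraph V) [DecidableRel G.Adj]
    (w : V → V → ℝ)
    (hwnn : ∀ i j, G.Adj i j → 0 ≤ w i j) :
    mcVal G w = sSup { t : ℝ | ∃ z : V → V → ℝ, (∀ i j, z i j = z j i) ∧
      (∀ i j, G.Adj i j → 0 ≤ z i j) ∧ fccVal G z ≤ 1 ∧ t = edgeInner G w z } := by
  set A := { t : ℝ | ∃ z : V → V → ℝ, (∀ i j, z i j = z j i) ∧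
      (∀ i j, G.Adj i j → 0 ≤ z i j) ∧ fccVal G z ≤ 1 ∧ t = edgeInner G w z }
  have le_mcVal : ∀ t ∈ A, t ≤ mcVal G w := by
    rintro _ ⟨z, -, -, hz, rfl⟩
    exact (edgeInner_le_fccVal_mul_mcVal hwnn z).trans
      (mul_le_of_le_one_left (mcVal_nonneg G w) hz)
  have cut_mem : ∀ S, edgeInner G w (cutInd G S) ∈ A := fun S =>
    ⟨cutInd G S, cutInd_symm G S, fun i j _ => cutInd_nonneg G S i j,
      fccVal_cutInd_le_one G S, rfl⟩
  exact le_antisymm (ciSup_le fun S => le_csSup ⟨_, le_mcVal⟩ (cut_mem S))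
    (csSup_le ⟨_, cut_mem ∅⟩ le_mcVal)

/-- `mc(G,·)` is the gauge dual of `fcc(G,·)`:
`mc(G,w) = max { wᵀz : z ≥ 0, fcc(G,z) ≤ 1 }`. -/
theorem mc_as_polar [Fintype V] [DecidableEq V] (G : SimpleGraph V) [DecidableRel G.Adj]
    (w : V → V → ℝ) (hwsym : ∀ i j, w i j = w j i)
    (hwnn : ∀ i j, G.Adj i j → 0 ≤ w i j) :
    mcVal G w = sSup { t : ℝ | ∃ z : V → V → ℝ, (∀ i j, z i j = z j i) ∧
      (∀ i j, G.Adj i j → 0 ≤ z i j) ∧ fccVal G z ≤ 1 ∧ t = edgeInner G w z } :=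
  mc_as_polar_general G w hwnn
end

section
/- Let G = (V,E) be a finite simple graph and z ∈ ℝ₊^E. For each edge ij ∈ E, the pair (w,x) = (e_{ij}, (1/2)(e_i + e_j)) satisfies Diag(x) - (1/4)L_G(e_{ij}) positive semidefinite and 1ᵀx ≤ 1; consequently z_{ij} ≤ GW^∘(G,z) for every ij ∈ E, i.e., ‖z‖_∞ ≤ GW^∘(G,z). -/
open Matrix BigOperators

variable {V : Type*}

/-! For an edge `ij`, testing a feasible `Y` against `e_i + e_j` gives
`Y_ij + Y_ji ≥ -(Y_ii + Y_jj) = -2μ`, hence `z_ij ≤ (1/4) L_G*(Y)_ij ≤ μ`. The dual certificate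
`(e_ij, (e_i + e_j)/2)` is feasible because of the rank-one identity
`2 Diag(e_i + e_j) - L_G(e_ij) = (e_i + e_j)(e_i + e_j)ᵀ`. -/

local notation "𝐞" i:max => (Pi.single i (1 : ℝ) : V → ℝ)

lemma lap_edge_indicator [Fintype V] [DecidableEq V] (G : SimpleGraph V) [DecidableRel G.Adj]
    {i j : V} (h : G.Adj i j) :
    lap G (fun a c => if (a = i ∧ c = j) ∨ (a = j ∧ c = i) then 1 else 0) =
      vecMulVec (𝐞 i - 𝐞 j) (𝐞 i - 𝐞 j) := by
  have hsplit : ∀ p q : V,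
      (if G.Adj p q then
        (if (p = i ∧ q = j) ∨ (p = j ∧ q = i) then (1 : ℝ) else 0) •
          vecMulVec (𝐞 p - 𝐞 q) (𝐞 p - 𝐞 q) else 0) =
      (if p = i ∧ q = j then vecMulVec (𝐞 i - 𝐞 j) (𝐞 i - 𝐞 j) else 0) +
      (if p = j ∧ q = i then vecMulVec (𝐞 j - 𝐞 i) (𝐞 j - 𝐞 i) else 0) := by
    intro p q
    by_cases h₁ : p = i ∧ q = j
    · obtain ⟨rfl, rfl⟩ := h₁
      simp [h, h.ne.symm]
    by_cases h₂ : p = j ∧ q = i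
    · obtain ⟨rfl, rfl⟩ := h₂
      simp [h.symm, h.ne.symm]
    · simp [h₁, h₂]
  simp only [lap, hsplit, Finset.sum_add_distrib, ite_and, Finset.sum_ite_irrel,
    Finset.sum_ite_eq', Finset.mem_univ, if_true, Finset.sum_const_zero, ← neg_sub (𝐞 i),
    neg_vecMulVec, vecMulVec_neg, neg_neg]
  module

lemma two_smul_diagonal_sub_vecMulVec [DecidableEq V] {i j : V} (hij : i ≠ j) :
    (2 : ℝ) • diagonal (𝐞 i + 𝐞 j) - vecMulVec (𝐞 i - 𝐞 j) (𝐞 i - 𝐞 j) =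
      vecMulVec (𝐞 i + 𝐞 j) (𝐞 i + 𝐞 j) := by
  ext a b
  simp only [Matrix.sub_apply, Matrix.smul_apply, diagonal_apply, vecMulVec_apply, Pi.add_apply,
    Pi.sub_apply, Pi.single_apply, smul_eq_mul]
  split_ifs <;> simp_all <;> norm_num

lemma Matrix.PosSemidef.lapAdj_le [Fintype V] [DecidableEq V] {Y : Matrix V V ℝ}
    (hY : Y.PosSemidef) (i j : V) : lapAdj Y i j ≤ 2 * (Y i i + Y j j) := by
  have hquad := hY.dotProduct_mulVec_nonneg (𝐞 i + 𝐞 j)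
  simp only [star_trivial, mulVec_add, mulVec_single_one, dotProduct_add, add_dotProduct,
    single_dotProduct, one_mul, col_apply] at hquad
  rw [lapAdj]
  linarith

lemma exists_GWpolar_feasible [Fintype V] [DecidableEq V] (G : SimpleGraph V)
    [DecidableRel G.Adj] (z : V → V → ℝ) :
    ∃ μ : ℝ, 0 ≤ μ ∧ ∃ Y : Matrix V V ℝ, Y.PosSemidef ∧ (∀ i, Y i i = μ) ∧
      ∀ i j, G.Adj i j → z i j ≤ (1 / 4 : ℝ) * lapAdj Y i j := by
  set μ := 2 * ∑ p : V × V, |z p.1 p.2|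
  refine ⟨μ, by positivity, μ • 1, PosSemidef.one.smul (by positivity), fun i => by simp,
    fun i j hij => ?_⟩
  have hz : z i j ≤ ∑ p : V × V, |z p.1 p.2| :=
    (le_abs_self _).trans <| Finset.single_le_sum (f := fun p : V × V => |z p.1 p.2|)
      (fun _ _ => abs_nonneg _) (Finset.mem_univ (i, j))
  simp only [lapAdj, Matrix.smul_apply, one_apply_eq, one_apply_ne hij.ne,
    one_apply_ne hij.ne.symm, smul_eq_mul]
  linarith

lemma le_GWpolar_of_adj [Fintype V] [DecidableEq V] (G : SimpleGraph V) [DecidableRel G.Adj]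
    (z : V → V → ℝ) {i j : V} (hij : G.Adj i j) : z i j ≤ GWpolar G z := by
  refine le_csInf (exists_GWpolar_feasible G z) ?_
  rintro μ ⟨-, Y, hY, hdiag, hz⟩
  have := hY.lapAdj_le i j
  rw [hdiag, hdiag] at this
  linarith [hz i j hij]

theorem norm_infty_le_GWpolar_general [Fintype V] [DecidableEq V] (G : SimpleGraph V)
    [DecidableRel G.Adj] (z : V → V → ℝ) :
    ∀ i j, G.Adj i j →
      (Matrix.diagonal
          (fun v => (1 / 2 : ℝ) * ((if v = i then (1 : ℝ) else 0) + (if v = j then 1 else 0))) -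
        (1 / 4 : ℝ) • lap G
          (fun a c => if (a = i ∧ c = j) ∨ (a = j ∧ c = i) then 1 else 0)).PosSemidef ∧
      (∑ v : V, (1 / 2 : ℝ) * ((if v = i then (1 : ℝ) else 0) + (if v = j then 1 else 0))) ≤ 1 ∧
      z i j ≤ GWpolar G z := by
  intro i j hij
  refine ⟨?_, ?_, le_GWpolar_of_adj G z hij⟩
  · have hx : (fun v => (1 / 2 : ℝ) * ((if v = i then (1 : ℝ) else 0) + (if v = j then 1 else 0)))
        = (1 / 2 : ℝ) • (𝐞 i + 𝐞 j) := by
      ext v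
      simp [Pi.single_apply]
    have hM : diagonal ((1 / 2 : ℝ) • (𝐞 i + 𝐞 j)) - (1 / 4 : ℝ) • lap G
          (fun a c => if (a = i ∧ c = j) ∨ (a = j ∧ c = i) then 1 else 0) =
        (1 / 4 : ℝ) • vecMulVec (𝐞 i + 𝐞 j) (𝐞 i + 𝐞 j) := by
      rw [lap_edge_indicator G hij, ← two_smul_diagonal_sub_vecMulVec hij.ne, diagonal_smul]
      module
    rw [hx, hM]
    exact (posSemidef_vecMulVec_self_star _).smul (by norm_num)
  · rw [← Finset.mul_sum, Finset.sum_add_distrib]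
    norm_num

/-- For each edge `ij`, the pair `(w, x) = (e_{ij}, (1/2)(e_i + e_j))` is dual feasible;
consequently `z_{ij} ≤ GW°(G,z)` for every edge `ij`, i.e. `‖z‖_∞ ≤ GW°(G,z)`. -/
theorem norm_infty_le_GWpolar [Fintype V] [DecidableEq V] (G : SimpleGraph V)
    [DecidableRel G.Adj] (z : V → V → ℝ) (hzsym : ∀ i j, z i j = z j i)
    (hznn : ∀ i j, G.Adj i j → 0 ≤ z i j) :
    ∀ i j, G.Adj i j →
      (Matrix.diagonal
          (fun v => (1 / 2 : ℝ) * ((if v = i then (1 : ℝ) else 0) + (if v = j then 1 else 0))) -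
        (1 / 4 : ℝ) • lap G
          (fun a c => if (a = i ∧ c = j) ∨ (a = j ∧ c = i) then 1 else 0)).PosSemidef ∧
      (∑ v : V, (1 / 2 : ℝ) * ((if v = i then (1 : ℝ) else 0) + (if v = j then 1 else 0))) ≤ 1 ∧
      z i j ≤ GWpolar G z :=
  norm_infty_le_GWpolar_general G z
end

section
/- Let G = (V,E) be a finite simple graph and y ∈ ℝ₊^{P(V)} a fractional cut cover of (G, z), i.e., ∑_{S⊆V} y_S χ_{δ(S)} ≥ z. Then the pair (μ, Y) := (1ᵀy, ∑_{S⊆V} y_S (1 − 2χ_S)(1 − 2χ_S)ᵀ) satisfies: Y is positive semidefinite, diag(Y) = μ·1, and (1/4)L_G*(Y) ≥ z. Consequently GW^∘(G,z) ≤ fcc(G,z). -/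
open Matrix BigOperators

variable {V : Type*}

/-!
A cut `S` gives the rank-one PSD matrix `uuᵀ` with `u = 1 − 2χ_S ∈ {±1}^V`: its diagonal is `1` and
`(1/4) L*(uuᵀ)_ij = (u_i − u_j)² / 4` is exactly `χ_δ(S)(ij)`. Weighting these matrices by a
fractional cut cover `y` therefore gives a feasible point of the SDP of value `1ᵀy`.
-/

def signVec [DecidableEq V] (S : Finset V) (v : V) : ℝ :=
  1 - 2 * (if v ∈ S then (1 : ℝ) else 0)

noncomputable def cutCoverMatrix [Fintype V] [DecidableEq V] (y : Finset V → ℝ) :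
    Matrix V V ℝ :=
  ∑ S : Finset V, y S • vecMulVec (signVec S) (signVec S)

lemma lapAdj_vecMulVec_self (u : V → ℝ) (i j : V) :
    lapAdj (vecMulVec u u) i j = (u i - u j) ^ 2 := by
  simp only [lapAdj, vecMulVec_apply]
  ring

lemma lapAdj_sum_smul {ι : Type*} (s : Finset ι) (c : ι → ℝ) (M : ι → Matrix V V ℝ)
    (i j : V) : lapAdj (∑ k ∈ s, c k • M k) i j = ∑ k ∈ s, c k * lapAdj (M k) i j := by
  simp only [lapAdj, Matrix.sum_apply, Matrix.smul_apply, smul_eq_mul,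
    ← Finset.sum_add_distrib, ← Finset.sum_sub_distrib, mul_add, mul_sub]

section signVec

variable [DecidableEq V]

lemma signVec_mul_self (S : Finset V) (v : V) : signVec S v * signVec S v = 1 := by
  unfold signVec
  split_ifs <;> norm_num

lemma sq_signVec_sub_eq_four_mul_cutInd (G : SimpleGraph V) [DecidableRel G.Adj]
    (S : Finset V) {i j : V} (hij : G.Adj i j) :
    (signVec S i - signVec S j) ^ 2 = 4 * cutInd G S i j := by
  by_cases hi : i ∈ S <;> by_cases hj : j ∈ S <;> norm_num [signVec, cutInd, hij, hi, hj]

end signVec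

section cutCoverMatrix

variable [Fintype V] [DecidableEq V]

lemma cutCoverMatrix_posSemidef {y : Finset V → ℝ} (hy : ∀ S, 0 ≤ y S) : (cutCoverMatrix y).PosSemidef :=
  posSemidef_sum _ fun S _ => (posSemidef_vecMulVec_self_star (signVec S)).smul (hy S)

lemma cutCoverMatrix_apply_self (y : Finset V → ℝ) (i : V) :
    cutCoverMatrix y i i = ∑ S : Finset V, y S := by
  simp [cutCoverMatrix, Matrix.sum_apply, vecMulVec_apply, signVec_mul_self]

lemma quarter_mul_lapAdj_cutCoverMatrix (G : SimpleGraph V) [DecidableRel G.Adj]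
    (y : Finset V → ℝ) {i j : V} (hij : G.Adj i j) :
    (1 / 4 : ℝ) * lapAdj (cutCoverMatrix y) i j = ∑ S : Finset V, y S * cutInd G S i j := by
  simp only [cutCoverMatrix, lapAdj_sum_smul, lapAdj_vecMulVec_self,
    sq_signVec_sub_eq_four_mul_cutInd G _ hij, Finset.mul_sum]
  exact Finset.sum_congr rfl fun S _ => by ring

end cutCoverMatrix

/-- From a fractional cut cover `y` of `(G, z)`, the pair
`(μ, Y) = (1ᵀy, ∑_S y_S (1 − 2χ_S)(1 − 2χ_S)ᵀ)` is feasible for the SDP defining `GW°`;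
consequently `GW°(G,z) ≤ fcc(G,z)`. -/
theorem GWpolar_le_fcc [Fintype V] [DecidableEq V] (G : SimpleGraph V) [DecidableRel G.Adj]
    (z : V → V → ℝ) (y : Finset V → ℝ) (hy : ∀ S, 0 ≤ y S)
    (hcov : ∀ i j, G.Adj i j → z i j ≤ ∑ S : Finset V, y S * cutInd G S i j) :
    (∑ S : Finset V, y S •
        vecMulVec (fun v => 1 - 2 * (if v ∈ S then (1 : ℝ) else 0))
          (fun v => 1 - 2 * (if v ∈ S then (1 : ℝ) else 0))).PosSemidef ∧
    (∀ i, (∑ S : Finset V, y S •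
        vecMulVec (fun v => 1 - 2 * (if v ∈ S then (1 : ℝ) else 0))
          (fun v => 1 - 2 * (if v ∈ S then (1 : ℝ) else 0))) i i = ∑ S : Finset V, y S) ∧
    (∀ i j, G.Adj i j → z i j ≤ (1 / 4 : ℝ) *
      lapAdj (∑ S : Finset V, y S •
        vecMulVec (fun v => 1 - 2 * (if v ∈ S then (1 : ℝ) else 0))
          (fun v => 1 - 2 * (if v ∈ S then (1 : ℝ) else 0))) i j) ∧
    GWpolar G z ≤ fccVal G z := by
  have feasible : ∀ y' : Finset V → ℝ, (∀ S, 0 ≤ y' S) →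
      (∀ i j, G.Adj i j → z i j ≤ ∑ S : Finset V, y' S * cutInd G S i j) →
      (cutCoverMatrix y').PosSemidef ∧ (∀ i, cutCoverMatrix y' i i = ∑ S, y' S) ∧
        ∀ i j, G.Adj i j → z i j ≤ (1 / 4 : ℝ) * lapAdj (cutCoverMatrix y') i j :=
    fun y' hy' hcov' => ⟨cutCoverMatrix_posSemidef hy', cutCoverMatrix_apply_self y',
      fun i j hij => (quarter_mul_lapAdj_cutCoverMatrix G y' hij).symm ▸ hcov' i j hij⟩
  obtain ⟨hpsd, hdiag, hlap⟩ := feasible y hy hcov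
  refine ⟨hpsd, hdiag, hlap, ?_⟩
  apply csInf_le_csInf
  · exact ⟨0, fun μ hμ => hμ.1⟩
  · exact ⟨_, y, hy, hcov, rfl⟩
  · rintro _ ⟨y', hy', hcov', rfl⟩
    exact ⟨Finset.sum_nonneg fun S _ => hy' S, _, feasible y' hy' hcov'⟩
end

section
/- Let G = (V,E) be a finite simple graph, t > 1 a real number, and f : V → ℝ^d a vector t-coloring, meaning ‖f(i)‖ = 1 for all i ∈ V and (t−1)·⟨f(i), f(j)⟩ ≤ −1 for every edge ij ∈ E. Define μ := 2(1 − 1/t) and Y_{ij} := μ·⟨f(i), f(j)⟩. Then Y is positive semidefinite, diag(Y) = μ·1, and (1/4)(L_G*(Y))_{ij} ≥ 1 for every edge ij; hence GW^∘(G, 1) ≤ 2(1 − 1/t). -/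
open Matrix BigOperators

variable {V : Type*}

/-! `Y` is `μ = 2(1 - 1/t)` times the Gram matrix of `f`, hence PSD with diagonal `μ`. On an
edge, `(1/4) L_G*(Y)_{ij} = (μ/2)(1 - ⟨f i, f j⟩) ≥ (μ/2)(1 + 1/(t - 1)) = 1`. -/

theorem GWpolar_le_of_feasible [Fintype V] [DecidableEq V] (G : SimpleGraph V)
    [DecidableRel G.Adj] {z : V → V → ℝ} {μ : ℝ} (hμ : 0 ≤ μ) {Y : Matrix V V ℝ}
    (hY : Y.PosSemidef) (hdiag : ∀ i, Y i i = μ)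
    (hz : ∀ i j, G.Adj i j → z i j ≤ (1 / 4 : ℝ) * lapAdj Y i j) :
    GWpolar G z ≤ μ :=
  csInf_le ⟨0, fun _ h => h.1⟩ ⟨hμ, Y, hY, hdiag, hz⟩

section Gram

variable {ι : Type*} [Fintype ι]

theorem posSemidef_smul_gram [Fintype V] (f : V → ι → ℝ) {c : ℝ} (hc : 0 ≤ c) :
    (Matrix.of fun i j => c * f i ⬝ᵥ f j).PosSemidef := by
  have hgram : (Matrix.of fun i j => c * f i ⬝ᵥ f j) = c • (Matrix.of f * (Matrix.of f)ᴴ) := by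
    ext i j
    simp [Matrix.mul_apply, dotProduct]
  rw [hgram]
  exact (posSemidef_self_mul_conjTranspose _).smul hc

theorem lapAdj_smul_gram (f : V → ι → ℝ) (c : ℝ) {i j : V}
    (hi : f i ⬝ᵥ f i = 1) (hj : f j ⬝ᵥ f j = 1) :
    lapAdj (Matrix.of fun i j => c * f i ⬝ᵥ f j) i j = 2 * c * (1 - f i ⬝ᵥ f j) := by
  simp only [lapAdj, Matrix.of_apply, hi, hj, dotProduct_comm (f j)]
  ring

end Gram

theorem one_le_one_sub_inv_mul_one_sub {t x : ℝ} (ht : 1 < t) (hx : (t - 1) * x ≤ -1) :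
    1 ≤ (1 - 1 / t) * (1 - x) := by
  have ht0 : 0 < t := by linarith
  rw [one_sub_div ht0.ne', div_mul_eq_mul_div, le_div_iff₀ ht0]
  linarith

/-- From a vector `t`-coloring `f` of `G`, the matrix `Y_{ij} = 2(1 − 1/t)⟨f(i), f(j)⟩`
is feasible for the SDP defining `GW°(G, 1)`; hence `GW°(G, 1) ≤ 2(1 − 1/t)`. -/
theorem GWpolar_le_of_vector_coloring [Fintype V] [DecidableEq V] (G : SimpleGraph V)
    [DecidableRel G.Adj] (t : ℝ) (ht : 1 < t) (d : ℕ) (f : V → Fin d → ℝ)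
    (hunit : ∀ i, ∑ k, f i k * f i k = 1)
    (hcol : ∀ i j, G.Adj i j → (t - 1) * (∑ k, f i k * f j k) ≤ -1) :
    (Matrix.of (fun i j => 2 * (1 - 1 / t) * ∑ k, f i k * f j k) : Matrix V V ℝ).PosSemidef ∧
    (∀ i, (Matrix.of (fun i j => 2 * (1 - 1 / t) * ∑ k, f i k * f j k) : Matrix V V ℝ) i i
        = 2 * (1 - 1 / t)) ∧
    (∀ i j, G.Adj i j → (1 : ℝ) ≤ (1 / 4 : ℝ) *
      lapAdj (Matrix.of (fun i j => 2 * (1 - 1 / t) * ∑ k, f i k * f j k) : Matrix V V ℝ) i j) ∧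
    GWpolar G (fun _ _ => 1) ≤ 2 * (1 - 1 / t) := by
  have hμ : 0 ≤ 2 * (1 - 1 / t) := by
    have : 1 / t < 1 := (div_lt_one (by linarith)).2 ht
    linarith
  have hpsd := posSemidef_smul_gram f hμ
  have hdiag : ∀ i, (Matrix.of fun i j => 2 * (1 - 1 / t) * f i ⬝ᵥ f j) i i
      = 2 * (1 - 1 / t) := fun i => by
    rw [Matrix.of_apply, dotProduct, hunit i, mul_one]
  have hedge : ∀ i j, G.Adj i j → (1 : ℝ) ≤ (1 / 4 : ℝ) *
      lapAdj (Matrix.of fun i j => 2 * (1 - 1 / t) * f i ⬝ᵥ f j) i j := fun i j hij => by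
    rw [lapAdj_smul_gram f _ (hunit i) (hunit j)]
    calc (1 : ℝ) ≤ (1 - 1 / t) * (1 - f i ⬝ᵥ f j) :=
          one_le_one_sub_inv_mul_one_sub ht (hcol i j hij)
      _ = _ := by ring
  exact ⟨hpsd, hdiag, hedge, GWpolar_le_of_feasible G hμ hpsd hdiag hedge⟩
end
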